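/- arXiv:0808.4119 — 3 statements merged into one kernel-verified Lean document; each statement's English description precedes it below -/
import Mathlib

section
/- Suppose {X_α, φ_{βα}} and {Y_α, ψ_{βα}} are inverse systems of uniform spaces over the same directed index set and f_α : X_α → Y_α are compatible maps, each having strong approximate uniqueness of chain lifts. Then the induced map f = lim f_α : lim X_α → lim Y_α has strong approximate uniqueness of chain lifts. -/
open Filter Set

universe u v

section Chains

variable {X : Type u} {Y : Type v}

/-- `c` is an `E`-chain: consecutive members of the list lie in `E`. -/
def IsEChain (E : Set (X × X)) (c : List X) : Prop :=
  c.Chain' (fun a b => (a, b) ∈ E)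

/-- Two chains (necessarily of the same length) are `E`-close. -/
def EClose (E : Set (X × X)) (c d : List X) : Prop :=
  List.Forall₂ (fun a b => (a, b) ∈ E) c d

variable [UniformSpace X] [UniformSpace Y]

/-- `f` generates the uniform structure on `Y`: it is uniformly continuous,
surjective, and images of entourages are entourages. -/
def GeneratesUS (f : X → Y) : Prop :=
  UniformContinuous f ∧ Function.Surjective f ∧
    ∀ E ∈ uniformity X, Prod.map f f '' E ∈ uniformity Y

/-- `f` has chain lifting. -/
def ChainLifting (f : X → Y) : Prop :=
  ∀ E ∈ uniformity X, ∃ F ∈ uniformity X, ∀ x : X, ∀ c : List Y,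
    IsEChain (Prod.map f f '' F) c → c.head? = some (f x) →
      ∃ d : List X, IsEChain E d ∧ d.head? = some x ∧ d.map f = c

/-- `f` has uniqueness of chain lifts. -/
def UniqueChainLifts (f : X → Y) : Prop :=
  ∀ E ∈ uniformity X, ∃ F ∈ uniformity X, F ⊆ E ∧ ∀ c d : List X,
    IsEChain F c → IsEChain F d → c.head? = d.head? → c.map f = d.map f → c = d

/-- `f` has approximate uniqueness of chain lifts. -/
def ApproxUniqueChainLifts (f : X → Y) : Prop :=
  ∀ E ∈ uniformity X, ∃ F ∈ uniformity X, F ⊆ E ∧ ∀ c d : List X,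
    IsEChain F c → IsEChain F d → c.head? = d.head? → c.map f = d.map f → EClose E c d

/-- `f` has strong approximate uniqueness of chain lifts. -/
def StrongApproxUniqueChainLifts (f : X → Y) : Prop :=
  ∀ E ∈ uniformity X, ∃ F ∈ uniformity X, F ⊆ E ∧ ∀ c d : List X,
    IsEChain F c → IsEChain F d → c.head? = d.head? → c.map f = d.map f → EClose F c d

/-- `f` is a uniform covering map. -/
def IsUCM (f : X → Y) : Prop :=
  GeneratesUS f ∧ ChainLifting f ∧ UniqueChainLifts f

/-- `h` has `F`-bounded fibers. -/
def BoundedFibers {Z : Type*} (F : Set (X × X)) (h : X → Z) : Prop :=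
  ∀ a b : X, h a = h b → (a, b) ∈ F

/-- `f` has complete fibers (each fiber, with the subspace uniformity, is complete). -/
def CompleteFibers (f : X → Y) : Prop :=
  ∀ y : Y, IsComplete (f ⁻¹' {y})

/-- `f` is approximated by uniform covering maps. -/
def ApproxByUCMs (f : X → Y) : Prop :=
  ∀ E ∈ uniformity X, ∃ F ∈ uniformity X, F ⊆ E ∧
    ∃ (Z : Type (max u v)) (_ : UniformSpace Z) (h : X → Z) (g : Z → Y),
      (∀ x, g (h x) = f x) ∧ IsUCM g ∧ BoundedFibers F h

end Chains

/-- An inverse system of uniform spaces over a preordered index set, with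
uniformly continuous bonding maps `bond i j h : Xs j → Xs i` for `i ≤ j`. -/
structure InvSys (ι : Type*) [Preorder ι] (Xs : ι → Type*)
    [∀ i, UniformSpace (Xs i)] where
  bond : ∀ i j, i ≤ j → Xs j → Xs i
  uc : ∀ i j (h : i ≤ j), UniformContinuous (bond i j h)
  bond_self : ∀ i (x : Xs i), bond i i le_rfl x = x
  bond_comp : ∀ i j k (hij : i ≤ j) (hjk : j ≤ k) (x : Xs k),
    bond i j hij (bond j k hjk x) = bond i k (hij.trans hjk) x

/-- The inverse limit (the set of threads), carrying the inverse limit uniformity: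
the subspace uniformity of the product uniformity, whose basic entourages are
preimages of entourages under the projections (since the index set is directed). -/
abbrev InvLim {ι : Type*} [Preorder ι] {Xs : ι → Type*} [∀ i, UniformSpace (Xs i)]
    (S : InvSys ι Xs) : Type _ :=
  { x : ∀ i, Xs i // ∀ i j (h : i ≤ j), S.bond i j h (x j) = x i }

/-- The strong Mittag-Leffler property of an inverse system. -/
def StrongML {ι : Type*} [Preorder ι] {Xs : ι → Type*} [∀ i, UniformSpace (Xs i)]
    (S : InvSys ι Xs) : Prop :=
  ∀ i : ι, ∃ j : ι, ∃ h : i ≤ j,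
    Set.range (S.bond i j h) = Set.range (fun x : InvLim S => x.1 i)

/-!
Since the index set is directed, every entourage of the inverse limit contains the pullback of
an entourage of a single `X_i`, and chains in the limit project to chains in `X_i`. So `F`-chains
in the limit with equal images under `f` project to `F_i`-chains with equal images under `f_i`,
which are `F_i`-close by the hypothesis on `f_i`; that is, the original chains are close for the
pullback of `F_i`.
-/

open scoped Uniformity

section Chains

variable {X X' Y Y' : Type*}

def ChainLiftsClose (f : X → Y) (F : Set (X × X)) : Prop :=
  ∀ c d : List X,
    IsEChain F c → IsEChain F d → c.head? = d.head? → c.map f = d.map f → EClose F c d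

theorem isEChain_map_iff (π : X → X') (F : Set (X' × X')) (c : List X) :
    IsEChain F (c.map π) ↔ IsEChain (Prod.map π π ⁻¹' F) c :=
  List.isChain_map π

theorem eClose_map_iff (π : X → X') (F : Set (X' × X')) (c d : List X) :
    EClose F (c.map π) (d.map π) ↔ EClose (Prod.map π π ⁻¹' F) c d := by
  rw [EClose, List.forall₂_map_left_iff, List.forall₂_map_right_iff]
  rfl

theorem ChainLiftsClose.preimage {f : X → Y} {g : X' → Y'} {π : X → X'} {σ : Y → Y'}
    {F : Set (X' × X')} (hg : ChainLiftsClose g F) (hcomm : ∀ x, σ (f x) = g (π x)) :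
    ChainLiftsClose f (Prod.map π π ⁻¹' F) := by
  intro c d hc hd hhead hmap
  have hmap' : (c.map π).map g = (d.map π).map g := by
    simpa only [List.map_map, Function.comp_def, hcomm] using congrArg (List.map σ) hmap
  rw [← eClose_map_iff]
  exact hg _ _ ((isEChain_map_iff π F c).2 hc) ((isEChain_map_iff π F d).2 hd)
    (by simp only [List.head?_map, hhead]) hmap'

end Chains

namespace InvLim

variable {ι : Type*} [Preorder ι] {Xs : ι → Type*} [∀ i, UniformSpace (Xs i)]
  (S : InvSys ι Xs)

theorem uniformContinuous_eval (i : ι) : UniformContinuous fun x : InvLim S => x.1 i :=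
  (Pi.uniformContinuous_proj Xs i).comp uniformContinuous_subtype_val

theorem uniformity_eq : 𝓤 (InvLim S) =
    ⨅ i, comap (fun p : InvLim S × InvLim S => (p.1.1 i, p.2.1 i)) (𝓤 (Xs i)) := by
  rw [uniformity_subtype, Pi.uniformity, comap_iInf]
  simp only [comap_comap]
  rfl

theorem antitone_comap_uniformity :
    Antitone fun i => comap (fun p : InvLim S × InvLim S => (p.1.1 i, p.2.1 i)) (𝓤 (Xs i)) := by
  intro i k hik
  dsimp only
  have hfactor : (fun p : InvLim S × InvLim S => (p.1.1 i, p.2.1 i)) =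
      Prod.map (S.bond i k hik) (S.bond i k hik) ∘
        fun p : InvLim S × InvLim S => (p.1.1 k, p.2.1 k) := by
    funext p
    simp only [Function.comp_apply, Prod.map, p.1.2 i k hik, p.2.2 i k hik]
  rw [hfactor, ← comap_comap]
  exact comap_mono (S.uc i k hik).le_comap

theorem exists_eval_preimage_subset [IsDirected ι (· ≤ ·)] [Nonempty ι]
    {E : Set (InvLim S × InvLim S)} (hE : E ∈ 𝓤 (InvLim S)) :
    ∃ i, ∃ Ei ∈ 𝓤 (Xs i),
      (fun p : InvLim S × InvLim S => (p.1.1 i, p.2.1 i)) ⁻¹' Ei ⊆ E := by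
  rw [uniformity_eq, mem_iInf_of_directed (antitone_comap_uniformity S).directed_ge] at hE
  obtain ⟨i, hi⟩ := hE
  exact ⟨i, mem_comap.1 hi⟩

end InvLim

theorem invLim_strongApproxUniqueChainLifts_general
    {ι : Type*} [Preorder ι] [IsDirected ι (· ≤ ·)] [Nonempty ι]
    {Xs : ι → Type*} [∀ i, UniformSpace (Xs i)]
    {Ys : ι → Type*} [∀ i, UniformSpace (Ys i)]
    (S : InvSys ι Xs) (T : InvSys ι Ys)
    (fι : ∀ i, Xs i → Ys i)
    (hsau : ∀ i, StrongApproxUniqueChainLifts (fι i))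
    (f : InvLim S → InvLim T)
    (hf : ∀ (x : InvLim S) (i : ι), (f x).1 i = fι i (x.1 i)) :
    StrongApproxUniqueChainLifts f := by
  intro E hE
  obtain ⟨i, Ei, hEi, hEiE⟩ := InvLim.exists_eval_preimage_subset S hE
  obtain ⟨Fi, hFi, hFiEi, hclose⟩ := hsau i Ei hEi
  exact ⟨_, InvLim.uniformContinuous_eval S i hFi, (preimage_mono hFiEi).trans hEiE,
    ChainLiftsClose.preimage (g := fι i) (σ := fun y : InvLim T => y.1 i) hclose
      (fun x => hf x i)⟩

/-- Strong approximate uniqueness of chain lifts is preserved by inverse limits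
of compatible maps between inverse systems of uniform spaces. -/
theorem invLim_strongApproxUniqueChainLifts
    {ι : Type*} [Preorder ι] [IsDirected ι (· ≤ ·)] [Nonempty ι]
    {Xs : ι → Type*} [∀ i, UniformSpace (Xs i)]
    {Ys : ι → Type*} [∀ i, UniformSpace (Ys i)]
    (S : InvSys ι Xs) (T : InvSys ι Ys)
    (fι : ∀ i, Xs i → Ys i)
    (hcompat : ∀ i j (h : i ≤ j) (x : Xs j),
      T.bond i j h (fι j x) = fι i (S.bond i j h x))
    (hsau : ∀ i, StrongApproxUniqueChainLifts (fι i))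
    (f : InvLim S → InvLim T)
    (hf : ∀ (x : InvLim S) (i : ι), (f x).1 i = fι i (x.1 i)) :
    StrongApproxUniqueChainLifts f :=
  invLim_strongApproxUniqueChainLifts_general S T fι hsau f hf
end

section
/- Let f : X → Y be a map between uniform spaces with Y Hausdorff. The following are equivalent: (1) there exist a strong Mittag-Leffler inverse system of uniform spaces {X_α, φ_{βα}} and compatible uniform covering maps f_α : X_α → Y (i.e., f_α ∘ φ_{βα} = f_β for β ≥ α) together with a uniform equivalence u : X → lim X_α satisfying (lim f_α) ∘ u = f; (2) X is Hausdorff and f generates the uniform structure on Y, has chain lifting, has strong approximate uniqueness of chain lifts, and has complete fibers. -/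
open Filter Set

universe u v

/-- The data witnessing that `f : X → Y` is (up to uniform equivalence) the
inverse limit of a strong Mittag-Leffler inverse system of uniform covering
maps over `Y`. -/
structure UCMInvLimData (X : Type u) (Y : Type v) [UniformSpace X]
    [UniformSpace Y] (f : X → Y) : Type (max u v + 1) where
  ι : Type (max u v)
  [pre : Preorder ι]
  [dir : IsDirected ι (· ≤ ·)]
  [nonempty : Nonempty ι]
  Xs : ι → Type (max u v)
  [uX : ∀ i, UniformSpace (Xs i)]
  S : InvSys ι Xs
  sml : StrongML S
  fι : ∀ i, Xs i → Y
  compat : ∀ i j (h : i ≤ j) (x : Xs j), fι i (S.bond i j h x) = fι j x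
  ucm : ∀ i, IsUCM (fι i)
  equiv : X ≃ᵤ InvLim S
  comm : ∀ (i : ι) (x : X), fι i ((equiv x).1 i) = f x

/-!
A uniform covering map over a Hausdorff space has uniformly discrete fibers; this makes each `X_α`
Hausdorff and its fibers complete, and both properties pass to the limit. The strong
Mittag-Leffler property makes every point of `X_β` (for `β` large) project to the coordinate of a
thread in `X_α`, so surjectivity, images of entourages and chain lifting pass from the maps `f_α`
to the limit map; uniqueness of chain lifts of one `f_α` gives strong approximate uniqueness.

Conversely, call an entourage `F` admissible if `F`-chains with equal heads and equal images are
`F`-close; by strong approximate uniqueness they form a base. Admissibility makes "same fiber and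
`F`-close" an equivalence relation, and chain lifting makes the images of entourages a uniformity
on the quotient `X/F`, for which `X/F → Y` is a uniform covering map. The quotients form an
inverse system with surjective bonding maps, and `X` maps onto its limit because a thread is a
Cauchy net inside one fiber of `f`, which is complete; the admissible entourages being a base makes
this map a uniform embedding.
-/

open scoped Uniformity Topology SetRel

section Chains

variable {X Y Z : Type*}

lemma IsEChain.mono {E E' : Set (X × X)} {c : List X} (h : IsEChain E c) (hE : E ⊆ E') :
    IsEChain E' c :=
  List.IsChain.imp (fun _ _ hab => hE hab) h

lemma isEChain_map (g : X → Z) {E : Set (Z × Z)} {c : List X} :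
    IsEChain E (c.map g) ↔ IsEChain (Prod.map g g ⁻¹' E) c :=
  List.isChain_map g

lemma isEChain_pair {E : Set (X × X)} {a b : X} : IsEChain E [a, b] ↔ (a, b) ∈ E :=
  List.isChain_pair

lemma map_eq_map_iff_forall₂ {g : X → Z} {c d : List X} :
    c.map g = d.map g ↔ List.Forall₂ (fun a b => g a = g b) c d := by
  rw [← List.forall₂_eq_eq_eq, List.forall₂_map_left_iff, List.forall₂_map_right_iff]

lemma IsEChain.exists_lift {g : X → Z} {R : Set (Z × Z)} {M : Set (X × X)}
    (hstep : ∀ x z, (g x, z) ∈ R → ∃ x', (x, x') ∈ M ∧ g x' = z) {c : List Z} {x : X}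
    (hc : IsEChain R c) (hx : c.head? = some (g x)) :
    ∃ d : List X, IsEChain M d ∧ d.head? = some x ∧ d.map g = c := by
  induction c generalizing x with
  | nil => simp at hx
  | cons z c ih =>
    obtain rfl : z = g x := by simpa using hx
    cases c with
    | nil => exact ⟨[x], List.isChain_singleton x, rfl, rfl⟩
    | cons z' c =>
      obtain ⟨hzz', hc⟩ := List.isChain_cons_cons.1 hc
      obtain ⟨x', hxx', rfl⟩ := hstep x z' hzz'
      obtain ⟨d, hd, hdx', hdc⟩ := ih hc rfl
      obtain ⟨d, rfl⟩ := List.head?_eq_some_iff.1 hdx'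
      refine ⟨x :: x' :: d, List.isChain_cons_cons.2 ⟨hxx', hd⟩, rfl, ?_⟩
      rw [List.map_cons, hdc]

def LiftsChains (f : X → Y) (F E : Set (X × X)) : Prop :=
  ∀ x : X, ∀ c : List Y, IsEChain (Prod.map f f '' F) c → c.head? = some (f x) →
    ∃ d : List X, IsEChain E d ∧ d.head? = some x ∧ d.map f = c

lemma LiftsChains.mono_left {f : X → Y} {F F' E : Set (X × X)} (h : LiftsChains f F E)
    (hF : F' ⊆ F) : LiftsChains f F' E :=
  fun x c hc => h x c (hc.mono (image_mono hF))

lemma LiftsChains.exists_step {f : X → Y} {F E : Set (X × X)} (h : LiftsChains f F E)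
    {x b : X} (hxb : (f x, f b) ∈ Prod.map f f '' F) : ∃ b', (x, b') ∈ E ∧ f b' = f b := by
  obtain ⟨d, hd, hdx, hdc⟩ := h x [f x, f b] (isEChain_pair.2 hxb) rfl
  obtain ⟨x', d, rfl, -, hd'⟩ := List.map_eq_cons_iff.1 hdc
  obtain ⟨b', rfl, hb'⟩ := List.map_eq_singleton_iff.1 hd'
  obtain rfl : x' = x := by simpa using hdx
  exact ⟨b', isEChain_pair.1 hd, hb'⟩

end Chains

section Maps

variable {X Y Z : Type*} [UniformSpace X] [UniformSpace Z]

lemma ChainLifting.exists_subset {f : X → Y} (h : ChainLifting f) {E : Set (X × X)}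
    (hE : E ∈ 𝓤 X) : ∃ F ∈ 𝓤 X, F ⊆ E ∧ LiftsChains f F E :=
  let ⟨F, hF, hlift⟩ := h E hE
  ⟨F ∩ E, inter_mem hF hE, inter_subset_right, LiftsChains.mono_left hlift inter_subset_left⟩

lemma GeneratesUS.map_uniformity {h : X → Z} (hh : GeneratesUS h) :
    (𝓤 X).map (Prod.map h h) = 𝓤 Z :=
  le_antisymm hh.1 fun _ hV => mem_of_superset (hh.2.2 _ hV) (image_preimage_subset _ _)

lemma GeneratesUS.uniformContinuous_iff [UniformSpace Y] {h : X → Z} (hh : GeneratesUS h)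
    {g : Z → Y} :
    UniformContinuous g ↔ UniformContinuous (g ∘ h) := by
  rw [UniformContinuous, ← hh.map_uniformity, tendsto_map'_iff]
  rfl

lemma GeneratesUS.of_comp [UniformSpace Y] {h : X → Z} {g : Z → Y} (hh : GeneratesUS h)
    (hgh : GeneratesUS (g ∘ h)) : GeneratesUS g := by
  refine ⟨hh.uniformContinuous_iff.2 hgh.1, hgh.2.1.of_comp, fun V hV => ?_⟩
  rw [← hh.map_uniformity] at hV
  refine mem_of_superset (hgh.2.2 _ hV) ?_
  rw [← Prod.map_comp_map, image_comp]
  exact image_mono (image_preimage_subset _ _)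

lemma ChainLifting.of_comp {h : X → Z} {g : Z → Y} (hh : GeneratesUS h)
    (hgh : ChainLifting (g ∘ h)) : ChainLifting g := by
  intro V hV
  rw [← hh.map_uniformity] at hV
  obtain ⟨F, hF, hlift⟩ := hgh _ hV
  refine ⟨Prod.map h h '' F, hh.2.2 F hF, fun z c hc hcz => ?_⟩
  obtain ⟨x, rfl⟩ := hh.2.1 z
  rw [← image_comp, Prod.map_comp_map] at hc
  obtain ⟨d, hd, hdx, rfl⟩ := hlift x c hc hcz
  exact ⟨d.map h, (isEChain_map h).2 hd, by simp [hdx], by simp⟩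

lemma UniformEquiv.generatesUS (e : X ≃ᵤ Z) : GeneratesUS e :=
  ⟨e.uniformContinuous, e.surjective, fun _ hE =>
    mem_of_superset (e.symm.uniformContinuous hE) fun p hp =>
      ⟨(e.symm p.1, e.symm p.2), hp, by simp⟩⟩

lemma GeneratesUS.comp_uniformEquiv [UniformSpace Y] {g : X → Y} (hg : GeneratesUS g)
    (e : Z ≃ᵤ X) :
    GeneratesUS (g ∘ e) :=
  e.symm.generatesUS.of_comp (by simpa [Function.comp_assoc] using hg)

lemma ChainLifting.comp_uniformEquiv {g : X → Y} (hg : ChainLifting g) (e : Z ≃ᵤ X) :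
    ChainLifting (g ∘ e) :=
  .of_comp e.symm.generatesUS (by simpa [Function.comp_assoc] using hg)

lemma StrongApproxUniqueChainLifts.comp_uniformEquiv {g : X → Y}
    (hg : StrongApproxUniqueChainLifts g) (e : Z ≃ᵤ X) :
    StrongApproxUniqueChainLifts (g ∘ e) := by
  intro E hE
  obtain ⟨F, hF, hFE, hclose⟩ := hg _ (e.symm.uniformContinuous hE)
  refine ⟨Prod.map e e ⁻¹' F, e.uniformContinuous hF, fun p hp => by simpa using hFE hp,
    fun c d hc hd hcd hgcd => ?_⟩
  have := hclose (c.map e) (d.map e) ((isEChain_map e).2 hc) ((isEChain_map e).2 hd)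
    (by simp [hcd]) (by simpa using hgcd)
  exact List.forall₂_map_left_iff.1 (List.forall₂_map_right_iff.1 this)

lemma CompleteFibers.comp_uniformEquiv {g : X → Y} (hg : CompleteFibers g) (e : Z ≃ᵤ X) :
    CompleteFibers (g ∘ e) := fun y => by
  rw [preimage_comp, ← e.image_symm,
    isComplete_image_iff e.symm.isUniformEmbedding.isUniformInducing]
  exact hg y

lemma UniqueChainLifts.exists_eq_of_map_eq {g : X → Y} (hg : UniqueChainLifts g) :
    ∃ F ∈ 𝓤 X, ∀ a b, (a, b) ∈ F → g a = g b → a = b := by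
  obtain ⟨F, hF, -, huniq⟩ := hg univ univ_mem
  refine ⟨F, hF, fun a b hab hgab => ?_⟩
  simpa using huniq [a, a] [a, b] (isEChain_pair.2 (refl_mem_uniformity hF))
    (isEChain_pair.2 hab) rfl (by simp [hgab])

lemma UniqueChainLifts.t0Space [UniformSpace Y] [T0Space Y] {g : X → Y} (hg : UniqueChainLifts g)
    (hgc : UniformContinuous g) : T0Space X := by
  obtain ⟨F, hF, hFeq⟩ := hg.exists_eq_of_map_eq
  refine (t0Space_iff_inseparable X).2 fun a b hab => hFeq a b ?_ (hab.map hgc.continuous).eq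
  exact Filter.mem_ker.1 (inseparable_iff_ker_uniformity.1 hab) F hF

lemma isComplete_of_forall_mem_eq {s : Set X} {F : Set (X × X)} (hF : F ∈ 𝓤 X)
    (hs : ∀ a ∈ s, ∀ b ∈ s, (a, b) ∈ F → a = b) : IsComplete s := by
  intro l hl hls
  obtain ⟨T, hT, hTF⟩ := (cauchy_iff.1 hl).2 F hF
  have hTs : T ∩ s ∈ l := inter_mem hT (le_principal_iff.1 hls)
  obtain ⟨a, haT, has⟩ := hl.1.nonempty_of_mem hTs
  refine ⟨a, has, (le_pure_iff.2 (mem_of_superset hTs ?_)).trans (pure_le_nhds a)⟩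
  exact fun b ⟨hbT, hbs⟩ => (hs a has b hbs (hTF (mk_mem_prod haT hbT))).symm

lemma UniqueChainLifts.completeFibers {g : X → Y} (hg : UniqueChainLifts g) :
    CompleteFibers g := by
  obtain ⟨F, hF, hFeq⟩ := hg.exists_eq_of_map_eq
  exact fun _ => isComplete_of_forall_mem_eq hF fun a ha b hb hab => hFeq a b hab (ha.trans hb.symm)

end Maps

section InverseLimit

variable {ι : Type*} [Preorder ι] {Xs : ι → Type*} [∀ i, UniformSpace (Xs i)]
  {S : InvSys ι Xs}

lemma uniformContinuous_invLim_proj (S : InvSys ι Xs) (i : ι) :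
    UniformContinuous fun t : InvLim S => t.1 i :=
  (Pi.uniformContinuous_proj Xs i).comp uniformContinuous_subtype_val

lemma InvSys.exists_entourage_subset [IsDirected ι (· ≤ ·)] [Nonempty ι]
    {U : Set (InvLim S × InvLim S)} (hU : U ∈ 𝓤 (InvLim S)) :
    ∃ i, ∃ V ∈ 𝓤 (Xs i), {q : InvLim S × InvLim S | (q.1.1 i, q.2.1 i) ∈ V} ⊆ U := by
  let comapProj i := comap (fun q : InvLim S × InvLim S => (q.1.1 i, q.2.1 i)) (𝓤 (Xs i))
  have hmono : ∀ i j, i ≤ j → comapProj j ≤ comapProj i := fun i j h => by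
    have hproj : (fun q : InvLim S × InvLim S => (q.1.1 i, q.2.1 i)) =
        (fun q => (S.bond i j h q.1, S.bond i j h q.2)) ∘ fun q => (q.1.1 j, q.2.1 j) :=
      funext fun q => by simp [q.1.2 i j h, q.2.2 i j h]
    simp only [comapProj, hproj, ← comap_comap]
    exact comap_mono (tendsto_iff_comap.1 (S.uc i j h))
  have hdir : Directed (· ≥ ·) comapProj := fun i j =>
    let ⟨k, hik, hjk⟩ := exists_ge_ge i j
    ⟨k, hmono i k hik, hmono j k hjk⟩
  have huniformity : 𝓤 (InvLim S) = ⨅ i, comapProj i := by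
    simp only [comapProj, uniformity_subtype, Pi.uniformity, comap_iInf, comap_comap]
    rfl
  rw [huniformity, mem_iInf_of_directed hdir] at hU
  obtain ⟨i, V, hV, hVU⟩ := hU
  exact ⟨i, V, hV, hVU⟩

variable {Y : Type*} {fs : ∀ i, Xs i → Y} {p : InvLim S → Y}

lemma StrongML.exists_thread_over (hS : StrongML S)
    (hcompat : ∀ i j (h : i ≤ j) x, fs i (S.bond i j h x) = fs j x)
    (hp : ∀ i t, p t = fs i (t.1 i)) (i : ι) :
    ∃ j, ∃ h : i ≤ j, ∀ w : Xs j,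
      ∃ t : InvLim S, t.1 i = S.bond i j h w ∧ p t = fs j w := by
  obtain ⟨j, h, hrange⟩ := hS i
  refine ⟨j, h, fun w => ?_⟩
  obtain ⟨t, ht : t.1 i = S.bond i j h w⟩ :
      S.bond i j h w ∈ range fun t : InvLim S => t.1 i :=
    hrange ▸ mem_range_self w
  exact ⟨t, ht, by rw [hp i, ht, hcompat]⟩

lemma generatesUS_invLim [UniformSpace Y] [IsDirected ι (· ≤ ·)] [Nonempty ι]
    (hS : StrongML S)
    (hcompat : ∀ i j (h : i ≤ j) x, fs i (S.bond i j h x) = fs j x)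
    (hgen : ∀ i, GeneratesUS (fs i)) (hp : ∀ i t, p t = fs i (t.1 i)) : GeneratesUS p := by
  obtain ⟨i₀⟩ := ‹Nonempty ι›
  refine ⟨?_, fun y => ?_, fun U hU => ?_⟩
  · rw [show p = fs i₀ ∘ fun t => t.1 i₀ from funext (hp i₀)]
    exact (hgen i₀).1.comp (uniformContinuous_invLim_proj S i₀)
  · obtain ⟨j, _, hlift⟩ := hS.exists_thread_over hcompat hp i₀
    obtain ⟨w, rfl⟩ := (hgen j).2.1 y
    obtain ⟨t, -, ht⟩ := hlift w
    exact ⟨t, ht⟩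
  · obtain ⟨i, V, hV, hVU⟩ := S.exists_entourage_subset hU
    obtain ⟨j, hij, hlift⟩ := hS.exists_thread_over hcompat hp i
    refine mem_of_superset ((hgen j).2.2 _ (S.uc i j hij hV)) ?_
    rintro _ ⟨⟨a, b⟩, hab, rfl⟩
    obtain ⟨s, hs, hsa⟩ := hlift a
    obtain ⟨t, ht, htb⟩ := hlift b
    refine ⟨(s, t), hVU ?_, by simp [hsa, htb]⟩
    show (s.1 i, t.1 i) ∈ V
    rwa [hs, ht]

lemma chainLifting_invLim [IsDirected ι (· ≤ ·)] [Nonempty ι] (hS : StrongML S)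
    (hcompat : ∀ i j (h : i ≤ j) x, fs i (S.bond i j h x) = fs j x)
    (hcl : ∀ i, ChainLifting (fs i)) (hp : ∀ i t, p t = fs i (t.1 i)) : ChainLifting p := by
  intro U hU
  obtain ⟨i, V, hV, hVU⟩ := S.exists_entourage_subset hU
  obtain ⟨j, hij, hlift⟩ := hS.exists_thread_over hcompat hp i
  obtain ⟨F, hF, hFlift⟩ := hcl j _ (S.uc i j hij hV)
  refine ⟨{q | (q.1.1 j, q.2.1 j) ∈ F}, uniformContinuous_invLim_proj S j hF,
    fun t c hc hct => ?_⟩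
  have hc' : IsEChain (Prod.map (fs j) (fs j) '' F) c := hc.mono <| by
    rintro _ ⟨⟨s, s'⟩, hss', rfl⟩
    exact ⟨_, hss', by simp [hp j]⟩
  obtain ⟨d, hd, hdt, rfl⟩ := hFlift (t.1 j) c hc' (by rw [hct, hp j])
  -- Push `d` down to `Xs i`, where by the strong Mittag-Leffler property every point of it is
  -- the coordinate of a thread, and lift it to threads from there.
  have hstep : ∀ (s : InvLim S) w,
      (s.1 i, w) ∈ {q | q ∈ V ∧ q.2 ∈ range (S.bond i j hij)} →
      ∃ s' : InvLim S, (s, s') ∈ {q : InvLim S × InvLim S | (q.1.1 i, q.2.1 i) ∈ V} ∧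
        s'.1 i = w := by
    rintro s _ ⟨hw, w, rfl⟩
    obtain ⟨s', hs', -⟩ := hlift w
    exact ⟨s', by simpa [hs'] using hw, hs'⟩
  obtain ⟨ts, hts, htst, htsd⟩ :=
    IsEChain.exists_lift hstep (c := d.map (S.bond i j hij)) (x := t)
    ((isEChain_map _).2 (hd.mono fun q hq => ⟨hq, q.2, rfl⟩)) (by simp [hdt, t.2 i j hij])
  refine ⟨ts, hts.mono hVU, htst, ?_⟩
  calc ts.map p = (ts.map fun s => s.1 i).map (fs i) := by simp [hp i]
    _ = d.map (fs j) := by simp [htsd, hcompat]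

lemma strongApproxUniqueChainLifts_invLim [IsDirected ι (· ≤ ·)] [Nonempty ι]
    (hu : ∀ i, UniqueChainLifts (fs i)) (hp : ∀ i t, p t = fs i (t.1 i)) :
    StrongApproxUniqueChainLifts p := by
  intro U hU
  obtain ⟨i, V, hV, hVU⟩ := S.exists_entourage_subset hU
  obtain ⟨F, hF, -, huniq⟩ := hu i univ univ_mem
  let π := fun t : InvLim S => t.1 i
  refine ⟨Prod.map π π ⁻¹' F ∩ U, inter_mem (uniformContinuous_invLim_proj S i hF) hU,
    inter_subset_right, fun c d hc hd hcd hpcd => ?_⟩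
  have hπcd : c.map π = d.map π :=
    huniq _ _ ((isEChain_map π).2 (hc.mono inter_subset_left))
      ((isEChain_map π).2 (hd.mono inter_subset_left)) (by simp [hcd])
      (by rwa [List.map_map, List.map_map, show fs i ∘ π = p from funext fun t => (hp i t).symm])
  refine (map_eq_map_iff_forall₂.1 hπcd).imp fun s t (hst : s.1 i = t.1 i) => ⟨?_, hVU ?_⟩
  · show (s.1 i, t.1 i) ∈ F
    exact hst ▸ refl_mem_uniformity hF
  · show (s.1 i, t.1 i) ∈ V
    exact hst ▸ refl_mem_uniformity hV

lemma completeFibers_invLim [Nonempty ι] [∀ i, T2Space (Xs i)]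
    (hcf : ∀ i, CompleteFibers (fs i)) (hp : ∀ i t, p t = fs i (t.1 i)) : CompleteFibers p := by
  intro y l hl hly
  have hli (i : ι) :
      ∃ a ∈ fs i ⁻¹' {y}, Tendsto (fun t : InvLim S => t.1 i) l (𝓝 a) := by
    refine hcf i y _ (hl.map (uniformContinuous_invLim_proj S i)) ?_
    refine le_principal_iff.2 (mem_map.2 ?_)
    exact mem_of_superset (le_principal_iff.1 hly) fun t (ht : p t = y) => (hp i t).symm.trans ht
  choose a ha hla using hli
  have : l.NeBot := hl.1
  have hthread : ∀ i j (h : i ≤ j), S.bond i j h (a j) = a i := fun i j h =>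
    tendsto_nhds_unique ((((S.uc i j h).continuous.tendsto _).comp (hla j)).congr
      fun t => t.2 i j h) (hla i)
  obtain ⟨i₀⟩ := ‹Nonempty ι›
  exact ⟨⟨a, hthread⟩, (hp i₀ _).trans (ha i₀),
    tendsto_subtype_rng.2 (tendsto_pi_nhds.2 hla)⟩

end InverseLimit

section AdmissibleEntourages

variable {X Y : Type*} [UniformSpace X] (f : X → Y)

/-- `f` has strong approximate uniqueness of chain lifts iff the admissible entourages form a base
of the uniformity. -/
def IsAdmissible (F : Set (X × X)) : Prop :=
  F ∈ 𝓤 X ∧ ∀ c d : List X, IsEChain F c → IsEChain F d → c.head? = d.head? →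
    c.map f = d.map f → EClose F c d

def AdmissibleEntourage : Type _ := {F : Set (X × X) // IsAdmissible f F}

instance : Preorder (AdmissibleEntourage f) :=
  Preorder.lift fun i => OrderDual.toDual i.1

variable {f}

lemma StrongApproxUniqueChainLifts.exists_admissibleEntourage_subset
    (hs : StrongApproxUniqueChainLifts f) {E : Set (X × X)} (hE : E ∈ 𝓤 X) :
    ∃ i : AdmissibleEntourage f, i.1 ⊆ E :=
  let ⟨F, hF, hFE, hclose⟩ := hs E hE
  ⟨⟨F, hF, hclose⟩, hFE⟩

lemma IsAdmissible.mem_of_mem_of_mem {F : Set (X × X)} (hF : IsAdmissible f F) {a b c : X}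
    (hab : (a, b) ∈ F) (hac : (a, c) ∈ F) (hbc : f b = f c) : (b, c) ∈ F := by
  have := hF.2 [a, b] [a, c] (isEChain_pair.2 hab) (isEChain_pair.2 hac) rfl (by simp [hbc])
  simp only [EClose, List.forall₂_cons] at this
  exact this.2.1

lemma StrongApproxUniqueChainLifts.isDirected_admissibleEntourage
    (hs : StrongApproxUniqueChainLifts f) :
    IsDirected (AdmissibleEntourage f) (· ≤ ·) :=
  ⟨fun i j =>
    let ⟨k, hk⟩ := hs.exists_admissibleEntourage_subset (inter_mem i.2.1 j.2.1)
    ⟨k, fun _ h => (hk h).1, fun _ h => (hk h).2⟩⟩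

lemma StrongApproxUniqueChainLifts.nonempty_admissibleEntourage
    (hs : StrongApproxUniqueChainLifts f) : Nonempty (AdmissibleEntourage f) :=
  let ⟨i, _⟩ := hs.exists_admissibleEntourage_subset univ_mem
  ⟨i⟩

namespace AdmissibleEntourage

variable (i : AdmissibleEntourage f)

def setoid : Setoid X where
  r a b := f a = f b ∧ (a, b) ∈ i.1
  iseqv :=
    have hsymm {a b : X} (h : f a = f b ∧ (a, b) ∈ i.1) : f b = f a ∧ (b, a) ∈ i.1 :=
      ⟨h.1.symm, i.2.mem_of_mem_of_mem h.2 (refl_mem_uniformity i.2.1) h.1.symm⟩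
    ⟨fun _ => ⟨rfl, refl_mem_uniformity i.2.1⟩, hsymm, fun hab hbc =>
      ⟨hab.1.trans hbc.1, i.2.mem_of_mem_of_mem (hsymm hab).2 hbc.2 (hab.1.trans hbc.1)⟩⟩

/-- A `def`, not an `abbrev`: instance search must not find the quotient topology on `Quotient`,
which need not agree with the topology of the uniformity put on `Cover` below. -/
def Cover : Type _ := Quotient i.setoid

def toCover : X → i.Cover := Quotient.mk i.setoid

def coverMap : i.Cover → Y := Quotient.lift f fun _ _ h => h.1

def bond {i j : AdmissibleEntourage f} (h : i ≤ j) : j.Cover → i.Cover :=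
  Quotient.lift i.toCover fun _ _ hab => Quotient.sound ⟨hab.1, h hab.2⟩

lemma toCover_surjective : Function.Surjective i.toCover :=
  Quotient.mk_surjective

lemma toCover_eq_toCover {a b : X} : i.toCover a = i.toCover b ↔ f a = f b ∧ (a, b) ∈ i.1 :=
  Quotient.eq

lemma exists_step {A B : Set (X × X)} (hA : A ⊆ i.1) (hBA : B ⊆ A) (hlift : LiftsChains f B A)
    {x a b : X} (hxa : i.toCover x = i.toCover a) (hab : (a, b) ∈ B) :
    ∃ b', (x, b') ∈ A ∧ i.toCover b' = i.toCover b := by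
  obtain ⟨hfxa, hxa⟩ := i.toCover_eq_toCover.1 hxa
  obtain ⟨b', hxb', hfb'⟩ :=
    hlift.exists_step (x := x) (b := b) ⟨(a, b), hab, by simp [hfxa]⟩
  have := i.2.2 [x, x, b'] [x, a, b]
    (List.isChain_cons_cons.2 ⟨refl_mem_uniformity i.2.1, isEChain_pair.2 (hA hxb')⟩)
    (List.isChain_cons_cons.2 ⟨hxa, isEChain_pair.2 (hA (hBA hab))⟩) rfl (by simp [hfxa, hfb'])
  simp only [EClose, List.forall₂_cons] at this
  exact ⟨b', hxb', i.toCover_eq_toCover.2 ⟨hfb', this.2.2.1⟩⟩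

lemma exists_lift_of_isEChain {A B : Set (X × X)} (hA : A ⊆ i.1) (hBA : B ⊆ A)
    (hlift : LiftsChains f B A) {C : List i.Cover} {x : X}
    (hC : IsEChain (Prod.map i.toCover i.toCover '' B) C) (hCx : C.head? = some (i.toCover x)) :
    ∃ d : List X, IsEChain A d ∧ d.head? = some x ∧ d.map i.toCover = C := by
  refine hC.exists_lift ?_ hCx
  rintro x _ ⟨⟨a, b⟩, hab, he⟩
  obtain ⟨hax, rfl⟩ := Prod.ext_iff.1 he
  exact i.exists_step hA hBA hlift hax.symm hab

lemma exists_comp_subset (hcl : ChainLifting f) {r : Set (i.Cover × i.Cover)}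
    (hr : Prod.map i.toCover i.toCover ⁻¹' r ∈ 𝓤 X) :
    ∃ B ∈ 𝓤 X,
      Prod.map i.toCover i.toCover '' B ○ Prod.map i.toCover i.toCover '' B ⊆ r := by
  obtain ⟨D, hD, hDr⟩ := comp_mem_uniformity_sets hr
  obtain ⟨B, hB, hBA, hlift⟩ := hcl.exists_subset (inter_mem hD i.2.1)
  refine ⟨B, hB, ?_⟩
  rintro ⟨u, w⟩ ⟨v, ⟨⟨x, y⟩, hxy, he⟩, ⟨⟨y', z⟩, hy'z, he'⟩⟩
  simp only [Prod.map, Prod.mk.injEq] at he he'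
  obtain ⟨rfl, rfl⟩ := he
  obtain ⟨hyy', rfl⟩ := he'
  obtain ⟨z', hyz', hz'⟩ := i.exists_step inter_subset_right hBA hlift hyy'.symm hy'z
  rw [← hz']
  exact hDr (show (x, z') ∈ D ○ D from ⟨y, (hBA hxy).1, hyz'.1⟩)

abbrev uniformSpace (hcl : ChainLifting f) : UniformSpace i.Cover :=
  .ofCore <| .mk' ((𝓤 X).map (Prod.map i.toCover i.toCover))
    (fun _ hr z => Quotient.inductionOn z fun x =>
      mem_preimage.1 (refl_mem_uniformity (x := x) (mem_map.1 hr)))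
    (fun _ hr => tendsto_swap_uniformity hr)
    (fun _ hr =>
      let ⟨_, hB, hBr⟩ := i.exists_comp_subset hcl hr
      ⟨_, image_mem_map hB, hBr⟩)

lemma generatesUS_toCover (hcl : ChainLifting f) :
    @GeneratesUS _ _ _ (i.uniformSpace hcl) i.toCover :=
  ⟨tendsto_map, i.toCover_surjective, fun _ => image_mem_map⟩

lemma uniqueChainLifts_coverMap [UniformSpace i.Cover] (hi : GeneratesUS i.toCover)
    (hcl : ChainLifting f) (hs : StrongApproxUniqueChainLifts f) : UniqueChainLifts i.coverMap := by
  intro V hV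
  rw [← hi.map_uniformity] at hV
  obtain ⟨k, hk⟩ := hs.exists_admissibleEntourage_subset (inter_mem hV i.2.1)
  have hki : k.1 ⊆ i.1 := fun _ h => (hk h).2
  obtain ⟨B, hB, hBk, hlift⟩ := hcl.exists_subset k.2.1
  refine ⟨Prod.map i.toCover i.toCover '' B, hi.2.2 B hB,
    image_subset_iff.2 fun _ h => (hk (hBk h)).1, fun C C' hC hC' hCC' hgCC' => ?_⟩
  obtain hnil | ⟨z, hz⟩ := Option.eq_none_or_eq_some C.head?
  · rw [List.head?_eq_none_iff.1 hnil, List.head?_eq_none_iff.1 (hCC'.symm.trans hnil)]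
  obtain ⟨x, rfl⟩ := i.toCover_surjective z
  obtain ⟨d, hd, hdx, rfl⟩ := i.exists_lift_of_isEChain hki hBk hlift hC hz
  obtain ⟨d', hd', hd'x, rfl⟩ := i.exists_lift_of_isEChain hki hBk hlift hC' (hCC' ▸ hz)
  have hfdd' : d.map f = d'.map f := by
    rw [List.map_map, List.map_map] at hgCC'
    exact hgCC'
  refine map_eq_map_iff_forall₂.2 <| List.Forall₂.mp (fun a b hab hfab => ?_)
    (k.2.2 d d' hd hd' (hdx.trans hd'x.symm) hfdd') (map_eq_map_iff_forall₂.1 hfdd')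
  exact i.toCover_eq_toCover.2 ⟨hfab, hki hab⟩

lemma isUCM_coverMap [UniformSpace Y] [UniformSpace i.Cover] (hi : GeneratesUS i.toCover)
    (hg : GeneratesUS f) (hcl : ChainLifting f) (hs : StrongApproxUniqueChainLifts f) :
    IsUCM i.coverMap :=
  ⟨hi.of_comp hg, .of_comp hi hcl, i.uniqueChainLifts_coverMap hi hcl hs⟩

end AdmissibleEntourage

end AdmissibleEntourages

section CoverSystem

variable {X Y : Type*} [UniformSpace X] {f : X → Y}
  [∀ i : AdmissibleEntourage f, UniformSpace i.Cover]

namespace AdmissibleEntourage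

def coverSystem (hgen : ∀ i : AdmissibleEntourage f, GeneratesUS i.toCover) :
    InvSys (AdmissibleEntourage f) Cover where
  bond _ _ h := bond h
  uc _ j _ := (hgen j).uniformContinuous_iff.2 (hgen _).1
  bond_self _ x := Quotient.inductionOn x fun _ => rfl
  bond_comp _ _ _ _ _ x := Quotient.inductionOn x fun _ => rfl

variable (hgen : ∀ i : AdmissibleEntourage f, GeneratesUS i.toCover)

def toInvLim (x : X) : InvLim (coverSystem hgen) :=
  ⟨fun i => i.toCover x, fun _ _ _ => rfl⟩

lemma toInvLim_injective [T0Space X] (hs : StrongApproxUniqueChainLifts f) :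
    Function.Injective (toInvLim hgen) := fun _ _ hab =>
  eq_of_uniformity fun hV =>
    let ⟨i, hi⟩ := hs.exists_admissibleEntourage_subset hV
    hi (i.toCover_eq_toCover.1 (congrArg (·.1 i) hab)).2

lemma toInvLim_surjective (hs : StrongApproxUniqueChainLifts f) (hcf : CompleteFibers f) :
    Function.Surjective (toInvLim hgen) := by
  have := hs.isDirected_admissibleEntourage
  obtain ⟨i₀⟩ := hs.nonempty_admissibleEntourage
  have : Nonempty (AdmissibleEntourage f) := ⟨i₀⟩
  intro t
  choose φ hφ using fun i : AdmissibleEntourage f => i.toCover_surjective (t.1 i)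
  have hrel : ∀ {i j : AdmissibleEntourage f} (h : i ≤ j),
      i.toCover (φ j) = i.toCover (φ i) :=
    fun {i j} h => by rw [hφ i, ← t.2 i j h, ← hφ j]; rfl
  have hy : ∀ i, f (φ i) = f (φ i₀) := fun i =>
    let ⟨k, hik, hi₀k⟩ := exists_ge_ge i i₀
    (i.toCover_eq_toCover.1 (hrel hik)).1.symm.trans (i₀.toCover_eq_toCover.1 (hrel hi₀k)).1
  have hφ_cauchy : CauchySeq φ := cauchy_map_iff'.2 <| tendsto_def.2 fun V hV => by
    obtain ⟨i, hiV⟩ := hs.exists_admissibleEntourage_subset hV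
    filter_upwards [(eventually_ge_atTop i).prod_mk (eventually_ge_atTop i)] with _ ⟨hij, hik⟩
    exact hiV (i.toCover_eq_toCover.1 ((hrel hij).trans (hrel hik).symm)).2
  obtain ⟨x, hx, hφx⟩ := cauchySeq_tendsto_of_isComplete (hcf (f (φ i₀))) hy hφ_cauchy
  refine ⟨x, Subtype.ext (funext fun i => ?_)⟩
  obtain ⟨k, hik, hxk⟩ := ((eventually_ge_atTop i).and
    (hφx.eventually (UniformSpace.ball_mem_nhds x i.2.1))).exists
  show i.toCover x = t.1 i
  rw [← hφ i, ← hrel hik]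
  exact i.toCover_eq_toCover.2 ⟨hx.trans (hy k).symm, hxk⟩

lemma isUniformInducing_toInvLim (hs : StrongApproxUniqueChainLifts f) :
    IsUniformInducing (toInvLim hgen) := by
  refine isUniformInducing_iff'.2 ⟨(uniformContinuous_pi.2 fun i => (hgen i).1).subtype_mk _,
    fun E hE => ?_⟩
  obtain ⟨G, hG, hGE⟩ := comp3_mem_uniformity hE
  obtain ⟨i, hiG⟩ := hs.exists_admissibleEntourage_subset hG
  refine mem_comap.2 ⟨_, uniformContinuous_invLim_proj _ i ((hgen i).2.2 _ i.2.1), ?_⟩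
  rintro ⟨x, y⟩ ⟨⟨a, b⟩, hab, he⟩
  simp only [Prod.map, Prod.mk.injEq] at he
  exact hGE ⟨a, hiG (i.toCover_eq_toCover.1 he.1.symm).2, b, hiG hab,
    hiG (i.toCover_eq_toCover.1 he.2).2⟩

lemma strongML_coverSystem : StrongML (coverSystem hgen) := by
  refine fun i => ⟨i, le_rfl, ?_⟩
  rw [range_eq_univ.2 fun z => ⟨z, (coverSystem hgen).bond_self i z⟩, eq_comm, range_eq_univ]
  exact fun z => let ⟨x, hx⟩ := i.toCover_surjective z; ⟨toInvLim hgen x, hx⟩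

end AdmissibleEntourage

end CoverSystem

open AdmissibleEntourage in
noncomputable def UCMInvLimData.ofAdmissible {X : Type (max u v)} {Y : Type v} [UniformSpace X]
    [UniformSpace Y] [T0Space X] (f : X → Y) (hg : GeneratesUS f) (hcl : ChainLifting f)
    (hs : StrongApproxUniqueChainLifts f) (hcf : CompleteFibers f) : UCMInvLimData X Y f :=
  letI : ∀ i : AdmissibleEntourage f, UniformSpace i.Cover := fun i => i.uniformSpace hcl
  have hgen : ∀ i : AdmissibleEntourage f, GeneratesUS i.toCover := fun i =>
    i.generatesUS_toCover hcl
  haveI := hs.isDirected_admissibleEntourage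
  haveI := hs.nonempty_admissibleEntourage
  { ι := AdmissibleEntourage f
    Xs := Cover
    S := coverSystem hgen
    sml := strongML_coverSystem hgen
    fι := coverMap
    compat := fun _ _ _ x => Quotient.inductionOn x fun _ => rfl
    ucm := fun i => i.isUCM_coverMap (hgen i) hg hcl hs
    equiv := (Equiv.ofBijective _ ⟨toInvLim_injective hgen hs, toInvLim_surjective hgen hs hcf⟩
      ).toUniformEquivOfIsUniformInducing (isUniformInducing_toInvLim hgen hs)
    comm := fun _ _ => rfl }

def UCMInvLimData.ofComp {X' : Type (max u v)} {X : Type u} {Y : Type v} [UniformSpace X']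
    [UniformSpace X] [UniformSpace Y] {f : X → Y} (e : X' ≃ᵤ X)
    (D : UCMInvLimData X' Y (f ∘ e)) : UCMInvLimData X Y f :=
  letI := D.pre
  letI := D.uX
  { D with
    equiv := e.symm.trans D.equiv
    comm := fun i x => by simpa using D.comm i (e.symm x) }

/-- For a map `f : X → Y` between uniform spaces with `Y` Hausdorff, `f` is
(up to uniform equivalence) the inverse limit of a strong Mittag-Leffler
inverse system of uniform covering maps over `Y` if and only if `X` is
Hausdorff and `f` generates the uniform structure on `Y`, has chain lifting,
has strong approximate uniqueness of chain lifts, and has complete fibers. -/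
theorem ucmInvLim_iff
    {X : Type u} {Y : Type v} [UniformSpace X] [UniformSpace Y] [T2Space Y]
    (f : X → Y) :
    Nonempty (UCMInvLimData X Y f) ↔
      (T2Space X ∧ GeneratesUS f ∧ ChainLifting f ∧
        StrongApproxUniqueChainLifts f ∧ CompleteFibers f) := by
  constructor
  · rintro ⟨D⟩
    let := D.pre
    let := D.uX
    have := D.dir
    have := D.nonempty
    have : ∀ i, T0Space (D.Xs i) := fun i => (D.ucm i).2.2.t0Space (D.ucm i).1.1
    have hp : ∀ i t, (f ∘ D.equiv.symm) t = D.fι i (t.1 i) := fun i t => by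
      simpa using (D.comm i (D.equiv.symm t)).symm
    have hf : f = (f ∘ D.equiv.symm) ∘ D.equiv := by ext; simp
    rw [hf]
    exact ⟨D.equiv.isUniformEmbedding.isEmbedding.t2Space,
      (generatesUS_invLim D.sml D.compat (fun i => (D.ucm i).1) hp).comp_uniformEquiv _,
      (chainLifting_invLim D.sml D.compat (fun i => (D.ucm i).2.1) hp).comp_uniformEquiv _,
      (strongApproxUniqueChainLifts_invLim (fun i => (D.ucm i).2.2) hp).comp_uniformEquiv _,
      (completeFibers_invLim (fun i => (D.ucm i).2.2.completeFibers) hp).comp_uniformEquiv _⟩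
  · rintro ⟨hX, hg, hcl, hs, hcf⟩
    -- `UCMInvLimData` asks for the index type and the spaces in `Type (max u v)`.
    let e : ULift.{v} X ≃ᵤ X := UniformEquiv.ulift X
    exact ⟨.ofComp e (.ofAdmissible _ (hg.comp_uniformEquiv e) (hcl.comp_uniformEquiv e)
      (hs.comp_uniformEquiv e) (hcf.comp_uniformEquiv e))⟩
end

section
/- Suppose {G_α, ψ_{βα}} is an inverse system of groups, {X_α, φ_{βα}} is an inverse system of uniform spaces over the same directed index set, and there are compatible actions of G_α on X_α, each of which has small scale bounded orbits. Set G = lim G_α and X = lim X_α. Then the induced action of G on X has small scale bounded orbits. -/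
open Filter Set

universe u v

section Actions

variable (G : Type*) (X : Type*)

/-- The action of `G` on the uniform space `X` is neutral. -/
def IsNeutralAction [SMul G X] [UniformSpace X] : Prop :=
  ∀ E ∈ uniformity X, ∃ F ∈ uniformity X,
    ∀ (x y : X) (g : G), (x, g • y) ∈ F → ∃ h : G, (h • x, y) ∈ E

/-- `G_E`: the subgroup of `G` generated by the elements that move some point
of `X` within the entourage `E`. -/
def subgroupEnt [Group G] [MulAction G X] (E : Set (X × X)) : Subgroup G :=
  Subgroup.closure { g : G | ∃ x : X, (x, g • x) ∈ E }

/-- The action has small scale bounded orbits. -/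
def SmallScaleBoundedOrbits [Group G] [MulAction G X] [UniformSpace X] : Prop :=
  ∀ E ∈ uniformity X, ∃ F ∈ uniformity X,
    ∀ g ∈ subgroupEnt G X F, ∀ x : X, (x, g • x) ∈ E

/-- The action is uniformly properly discontinuous. -/
def UnifProperlyDisc [Group G] [SMul G X] [UniformSpace X] : Prop :=
  ∃ E₀ ∈ uniformity X, ∀ (g : G) (x : X), (x, g • x) ∈ E₀ → g = 1

/-- The action is faithful. -/
def FaithfulAction [Group G] [SMul G X] : Prop :=
  ∀ g : G, (∀ x : X, g • x = x) → g = 1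

/-- The action is uniformly equicontinuous. -/
def UnifEquicont [SMul G X] [UniformSpace X] : Prop :=
  ∀ E ∈ uniformity X, ∃ F ∈ uniformity X,
    ∀ (g : G) (x y : X), (x, y) ∈ F → (g • x, g • y) ∈ E

/-- The entourage `E` is `G`-invariant. -/
def InvariantEnt [SMul G X] (E : Set (X × X)) : Prop :=
  ∀ (g : G) (x y : X), (x, y) ∈ E → (g • x, g • y) ∈ E

end Actions

/-- An inverse system of groups over a preordered index set. -/
structure GrpInvSys (ι : Type*) [Preorder ι] (Gs : ι → Type*)
    [∀ i, Group (Gs i)] where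
  bond : ∀ i j, i ≤ j → Gs j →* Gs i
  bond_self : ∀ i (g : Gs i), bond i i le_rfl g = g
  bond_comp : ∀ i j k (hij : i ≤ j) (hjk : j ≤ k) (g : Gs k),
    bond i j hij (bond j k hjk g) = bond i k (hij.trans hjk) g

/-- The inverse limit of an inverse system of groups,
as the subgroup of threads of the product group. -/
def GrpInvLim {ι : Type*} [Preorder ι] {Gs : ι → Type*} [∀ i, Group (Gs i)]
    (T : GrpInvSys ι Gs) : Subgroup (∀ i, Gs i) where
  carrier := { g | ∀ i j (h : i ≤ j), T.bond i j h (g j) = g i }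
  one_mem' := by intro i j h; simp
  mul_mem' := by
    intro a b ha hb i j h
    simp only [Pi.mul_apply, map_mul, ha i j h, hb i j h]
  inv_mem' := by
    intro a ha i j h
    simp only [Pi.inv_apply, map_inv, ha i j h]

/-- The strong Mittag-Leffler property of an inverse system of groups. -/
def GrpStrongML {ι : Type*} [Preorder ι] {Gs : ι → Type*} [∀ i, Group (Gs i)]
    (T : GrpInvSys ι Gs) : Prop :=
  ∀ i : ι, ∃ j : ι, ∃ h : i ≤ j,
    Set.range (T.bond i j h) =
      Set.range (fun g : (GrpInvLim T) => (g : ∀ i, Gs i) i)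

/-!
Since the index set is directed, every entourage of the inverse limit contains the pullback of an
entourage `E_i` of a single coordinate space `X_i`. Take `F_i` for `E_i` from the hypothesis on
`X_i` and pull it back to the limit: projection to the `i`-th coordinate is equivariant along the
projection `G → G_i`, so it maps the subgroup generated by small movers into `(G_i)_{F_i}`, whose
elements move every point of `X_i` within `E_i`.
-/

open scoped Uniformity

namespace InvLim

variable {ι : Type*} [Preorder ι] {Xs : ι → Type*} [∀ i, UniformSpace (Xs i)] (S : InvSys ι Xs)

abbrev proj (i : ι) (x : InvLim S) : Xs i := x.1 i

theorem uniformity_eq_iInf_comap :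
    𝓤 (InvLim S) = ⨅ i, comap (Prod.map (proj S i) (proj S i)) (𝓤 (Xs i)) := by
  rw [uniformity_subtype, Pi.uniformity, comap_iInf]
  simp only [comap_comap]
  rfl

theorem comap_uniformity_le_of_le {i k : ι} (hik : i ≤ k) :
    comap (Prod.map (proj S k) (proj S k)) (𝓤 (Xs k)) ≤
      comap (Prod.map (proj S i) (proj S i)) (𝓤 (Xs i)) := by
  have hproj : Prod.map (proj S i) (proj S i) =
      Prod.map (S.bond i k hik) (S.bond i k hik) ∘ Prod.map (proj S k) (proj S k) := by
    funext ⟨x, y⟩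
    simp only [Function.comp_apply, Prod.map_apply, x.2 i k hik, y.2 i k hik]
  rw [hproj, ← comap_comap]
  exact comap_mono (S.uc i k hik).le_comap

theorem hasBasis_uniformity [IsDirected ι (· ≤ ·)] [Nonempty ι] :
    (𝓤 (InvLim S)).HasBasis (fun p : Σ i, Set (Xs i × Xs i) => p.2 ∈ 𝓤 (Xs p.1))
      (fun p => Prod.map (proj S p.1) (proj S p.1) ⁻¹' p.2) := by
  rw [uniformity_eq_iInf_comap]
  refine hasBasis_iInf_of_directed' _ _ (fun i => (𝓤 (Xs i)).basis_sets.comap _) fun i j => ?_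
  obtain ⟨k, hik, hjk⟩ := directed_of (· ≤ ·) i j
  exact ⟨k, comap_uniformity_le_of_le S hik, comap_uniformity_le_of_le S hjk⟩

end InvLim

theorem subgroupEnt_map_le {G H X Y : Type*} [Group G] [Group H] [MulAction G X] [MulAction H Y]
    (f : G →* H) (p : X → Y) (hp : ∀ (g : G) (x : X), p (g • x) = f g • p x)
    (F : Set (Y × Y)) : (subgroupEnt G X (Prod.map p p ⁻¹' F)).map f ≤ subgroupEnt H Y F := by
  rw [subgroupEnt, MonoidHom.map_closure]
  refine Subgroup.closure_mono ?_
  rintro _ ⟨g, ⟨x, hx⟩, rfl⟩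
  exact ⟨p x, by simpa [hp] using hx⟩

theorem invLim_smallScaleBoundedOrbits_general
    {ι : Type*} [Preorder ι] [IsDirected ι (· ≤ ·)] [Nonempty ι]
    {Xs : ι → Type*} [∀ i, UniformSpace (Xs i)]
    {Gs : ι → Type*} [∀ i, Group (Gs i)]
    [∀ i, MulAction (Gs i) (Xs i)]
    (S : InvSys ι Xs) (T : GrpInvSys ι Gs)
    (hssbo : ∀ i, SmallScaleBoundedOrbits (Gs i) (Xs i))
    [MulAction (GrpInvLim T) (InvLim S)]
    (hact : ∀ (g : GrpInvLim T) (x : InvLim S) (i : ι),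
      (g • x).1 i = (g : ∀ i, Gs i) i • x.1 i) :
    SmallScaleBoundedOrbits (GrpInvLim T) (InvLim S) := by
  intro E hE
  obtain ⟨⟨i, Ei⟩, hEi, hEiE⟩ := (InvLim.hasBasis_uniformity S).mem_iff.mp hE
  obtain ⟨Fi, hFi, hbounded⟩ := hssbo i Ei hEi
  refine ⟨_, (InvLim.hasBasis_uniformity S).mem_of_mem (i := ⟨i, Fi⟩) hFi, fun g hg x => hEiE ?_⟩
  let eval : GrpInvLim T →* Gs i := (Pi.evalMonoidHom Gs i).comp (GrpInvLim T).subtype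
  have hgi : eval g ∈ subgroupEnt (Gs i) (Xs i) Fi :=
    subgroupEnt_map_le eval (InvLim.proj S i) (fun g x => hact g x i) Fi
      (Subgroup.mem_map_of_mem eval hg)
  show (x.1 i, (g • x).1 i) ∈ Ei
  rw [hact]
  exact hbounded _ hgi (x.1 i)

/-- The inverse limit of compatible actions with small scale bounded orbits has
small scale bounded orbits. -/
theorem invLim_smallScaleBoundedOrbits
    {ι : Type*} [Preorder ι] [IsDirected ι (· ≤ ·)] [Nonempty ι]
    {Xs : ι → Type*} [∀ i, UniformSpace (Xs i)]
    {Gs : ι → Type*} [∀ i, Group (Gs i)]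
    [∀ i, MulAction (Gs i) (Xs i)]
    (S : InvSys ι Xs) (T : GrpInvSys ι Gs)
    (hcompat : ∀ i j (h : i ≤ j) (g : Gs j) (x : Xs j),
      S.bond i j h (g • x) = T.bond i j h g • S.bond i j h x)
    (hssbo : ∀ i, SmallScaleBoundedOrbits (Gs i) (Xs i))
    [MulAction (GrpInvLim T) (InvLim S)]
    (hact : ∀ (g : GrpInvLim T) (x : InvLim S) (i : ι),
      (g • x).1 i = (g : ∀ i, Gs i) i • x.1 i) :
    SmallScaleBoundedOrbits (GrpInvLim T) (InvLim S) :=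
  invLim_smallScaleBoundedOrbits_general S T hssbo hact
end
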